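/- arXiv:2512.04486 — 6 statements merged into one kernel-verified Lean document; each statement's English description precedes it below -/
import Mathlib

section
/- Let p ≥ 1 and n = 2p+2. Then the geometric realization of the total 2-cut complex Δᵗ₂(C_n^p) of the p-th power of the cycle graph C_n is homotopy equivalent to the sphere S^{(n−4)/2} = S^{p−1}. -/
/-- The total 2-cut complex of a finite simple graph `G`: the faces are the subsets
`σ` of the vertex set whose complement `σᶜ` contains a "disconnected 2-set", i.e.
two distinct nonadjacent vertices. -/
def totalCut2 {V : Type*} [Fintype V] [DecidableEq V] (G : SimpleGraph V) :
    Set (Finset V) :=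
  {σ | ∃ u v : V, u ∉ σ ∧ v ∉ σ ∧ u ≠ v ∧ ¬ G.Adj u v}

/-- The `p`-th power `C_n^p` of the cycle graph `C_n`, on vertex set `Fin n`:
distinct `u, v` are adjacent iff `v ≡ u ± t (mod n)` for some `1 ≤ t ≤ p`. -/
def cyclePower (n p : ℕ) : SimpleGraph (Fin n) where
  Adj u v := u ≠ v ∧ ∃ t, 1 ≤ t ∧ t ≤ p ∧
      ((u.val + t) % n = v.val ∨ (v.val + t) % n = u.val)
  symm := by
    constructor
    rintro u v ⟨h, t, h1, h2, h3⟩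
    exact ⟨h.symm, t, h1, h2, h3.symm⟩
  loopless := by constructor; rintro u ⟨h, -⟩; exact h rfl

/-- The geometric realization of a simplicial complex `Δ` on a finite vertex set `V`,
as the subspace of `V → ℝ` consisting of convex combinations of vertices
supported on a face of `Δ`. -/
abbrev geomRealization {V : Type*} [Fintype V] (Δ : Set (Finset V)) : Type _ :=
  {f : V → ℝ // (∀ v, 0 ≤ f v) ∧ (∑ v, f v) = 1 ∧ ∃ s ∈ Δ, Function.support f = ↑s}

/-!
In `C_{2p+2}^p` two distinct vertices are non-adjacent exactly when they are antipodal, so a set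
of vertices is a face of `Δᵗ₂` iff it misses some antipodal pair: `Δᵗ₂` is the pullback of the
boundary of the `p`-simplex along the quotient map onto the `p + 1` antipodal classes. Pushing
weights forward along a quotient map that has a section is a homotopy equivalence of realizations:
the section is a right inverse, and the straight-line homotopy from `section ∘ pushforward` to the
identity never changes the pushed-forward weights, so it stays in the complex. Finally, central
projection from the barycenter identifies the boundary of the `p`-simplex with `ℝ^p ∖ {0}` up to
homotopy, and normalization retracts that onto `S^{p-1}`.
-/

open Finset ContinuousMap

section
variable {X E : Type*} [TopologicalSpace X] [AddCommGroup E] [TopologicalSpace E]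
  [IsTopologicalAddGroup E] [Module ℝ E] [ContinuousSMul ℝ E]

theorem ContinuousMap.homotopic_of_segment_subset {P : E → Prop} (f g : C(X, {x // P x}))
    (h : ∀ x, segment ℝ (f x : E) (g x) ⊆ {z | P z}) : f.Homotopic g := by
  let ι : C({x // P x}, E) := ⟨Subtype.val, continuous_subtype_val⟩
  let F := Homotopy.affine (ι.comp f) (ι.comp g)
  exact ⟨{ toFun := fun q => ⟨F q, h q.2 (by simpa [F, ι] using lineMap_mem_segment ℝ _ _ q.1.2)⟩
           continuous_toFun := F.continuous.subtype_mk _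
           map_zero_left := fun x => by ext; simp [F, ι]
           map_one_left := fun x => by ext; simp [F, ι] }⟩

theorem ContinuousMap.homotopic_id_of_pos_smul {P : E → Prop}
    (hP : ∀ x, P x → ∀ r : ℝ, 0 < r → P (r • x)) (f : C({x // P x}, {x // P x}))
    (μ : {x // P x} → ℝ) (hμ : ∀ x, 0 < μ x) (hf : ∀ x, (f x : E) = μ x • (x : E)) :
    f.Homotopic (ContinuousMap.id _) := by
  refine homotopic_of_segment_subset f _ fun x => (segment_subset_iff ℝ).2 fun a b ha hb hab => ?_
  have hpos : 0 < a * μ x + b := by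
    rcases ha.eq_or_lt with rfl | ha
    · linarith
    · nlinarith [hμ x]
  simpa [hf, smul_smul, ← add_smul] using hP _ x.2 _ hpos

end

def ContinuousMap.HomotopyEquiv.ofLeftInverse {X Y : Type*} [TopologicalSpace X]
    [TopologicalSpace Y] (f : C(X, Y)) (g : C(Y, X)) (hfg : Function.LeftInverse f g)
    (hgf : (g.comp f).Homotopic (.id X)) : X ≃ₕ Y where
  toFun := f
  invFun := g
  left_inv := hgf
  right_inv := by rw [show f.comp g = .id Y from ext hfg]

section
variable {E : Type*} [NormedAddCommGroup E] [NormedSpace ℝ E]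

noncomputable def homotopyEquivUnitSphere : {x : E // x ≠ 0} ≃ₕ Metric.sphere (0 : E) 1 :=
  .ofLeftInverse
    ⟨fun x => ⟨‖(x : E)‖⁻¹ • (x : E), by simp [norm_smul, x.2]⟩, by
      apply Continuous.subtype_mk
      exact (continuous_subtype_val.norm.inv₀ fun x => norm_ne_zero_iff.2 x.2).smul
        continuous_subtype_val⟩
    ⟨fun x => ⟨x, ne_zero_of_mem_unit_sphere x⟩, by fun_prop⟩
    (fun x => Subtype.ext (by simp [norm_eq_of_mem_sphere x]))
    (homotopic_id_of_pos_smul (fun _ hx _ hr => smul_ne_zero hr.ne' hx) _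
      (fun x => ‖(x : E)‖⁻¹) (fun x => inv_pos.2 (norm_pos_iff.2 x.2)) fun _ => rfl)

end

theorem exists_support_eq_mem_iff {V : Type*} [Fintype V] (Δ : Set (Finset V)) (f : V → ℝ) :
    (∃ s ∈ Δ, Function.support f = ↑s) ↔ ({v | f v ≠ 0} : Finset V) ∈ Δ := by
  constructor
  · rintro ⟨s, hs, hf⟩
    convert hs
    ext v
    simp [← Finset.mem_coe, ← hf]
  · exact fun h => ⟨_, h, by ext; simp⟩

section
variable {V W : Type*} [Fintype V] [DecidableEq W]

def pushforward (R : Type*) [Semiring R] (π : V → W) : (V → R) →ₗ[R] (W → R) where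
  toFun f w := ∑ v with π v = w, f v
  map_add' f g := by ext; simp [sum_add_distrib]
  map_smul' r f := by ext; simp [mul_sum]

theorem pushforward_apply {R : Type*} [Semiring R] (π : V → W) (f : V → R) (w : W) :
    pushforward R π f w = ∑ v with π v = w, f v := rfl

theorem pushforward_pushforward {U : Type*} [Fintype U] [DecidableEq V] {R : Type*} [Semiring R]
    (π : V → W) (s : U → V) (f : U → R) :
    pushforward R π (pushforward R s f) = pushforward R (π ∘ s) f := by
  ext w
  rw [pushforward_apply, pushforward_apply, ← sum_fiberwise_of_maps_to (g := s)
    (t := {v | π v = w}) (by simp)]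
  refine sum_congr rfl fun v hv => sum_congr ?_ fun _ _ => rfl
  ext u
  simp only [mem_filter, mem_univ, true_and, Function.comp_apply, iff_and_self]
  rintro rfl
  simpa using hv

theorem pushforward_id {R : Type*} [Semiring R] [DecidableEq V] (f : V → R) :
    pushforward R id f = f := by
  ext v
  simp [pushforward_apply, sum_filter]

theorem pushforward_nonneg (π : V → W) {f : V → ℝ} (hf : ∀ v, 0 ≤ f v) (w : W) :
    0 ≤ pushforward ℝ π f w :=
  sum_nonneg fun v _ => hf v

theorem continuous_pushforward (π : V → W) : Continuous (pushforward ℝ π) :=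
  (pushforward ℝ π).continuous_of_finiteDimensional

variable [Fintype W]

theorem sum_pushforward (π : V → W) (f : V → ℝ) : ∑ w, pushforward ℝ π f w = ∑ v, f v :=
  sum_fiberwise univ π f

theorem filter_pushforward_ne_zero (π : V → W) {f : V → ℝ} (hf : ∀ v, 0 ≤ f v) :
    ({w | pushforward ℝ π f w ≠ 0} : Finset W) = ({v | f v ≠ 0} : Finset V).image π := by
  ext w
  simp [pushforward_apply, sum_eq_zero_iff_of_nonneg fun v _ => hf v, and_comm]

theorem exists_support_eq_mem_preimage_image_iff (Δ : Set (Finset W)) (π : V → W) {f : V → ℝ}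
    (hf : ∀ v, 0 ≤ f v) :
    (∃ t ∈ Finset.image π ⁻¹' Δ, Function.support f = ↑t) ↔
      ∃ t ∈ Δ, Function.support (pushforward ℝ π f) = ↑t := by
  rw [exists_support_eq_mem_iff, exists_support_eq_mem_iff, filter_pushforward_ne_zero π hf,
    Set.mem_preimage]

noncomputable def geomRealizationPushforward (Δ : Set (Finset W)) (π : V → W) :
    C(geomRealization (Finset.image π ⁻¹' Δ), geomRealization Δ) :=
  ⟨fun f => ⟨pushforward ℝ π f.1, pushforward_nonneg π f.2.1,
    (sum_pushforward π f.1).trans f.2.2.1,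
    (exists_support_eq_mem_preimage_image_iff Δ π f.2.1).1 f.2.2.2⟩,
    ((continuous_pushforward π).comp continuous_subtype_val).subtype_mk _⟩

variable [DecidableEq V] {π : V → W} {s : W → V}

theorem pushforward_pushforward_of_leftInverse (hs : Function.LeftInverse π s) (g : W → ℝ) :
    pushforward ℝ π (pushforward ℝ s g) = g := by
  rw [pushforward_pushforward, hs.comp_eq_id, pushforward_id]

noncomputable def geomRealizationSection (Δ : Set (Finset W)) (hs : Function.LeftInverse π s) :
    C(geomRealization Δ, geomRealization (Finset.image π ⁻¹' Δ)) :=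
  ⟨fun g => ⟨pushforward ℝ s g.1, pushforward_nonneg s g.2.1,
    (sum_pushforward s g.1).trans g.2.2.1,
    (exists_support_eq_mem_preimage_image_iff Δ π (pushforward_nonneg s g.2.1)).2
      (by rw [pushforward_pushforward_of_leftInverse hs]; exact g.2.2.2)⟩,
    ((continuous_pushforward s).comp continuous_subtype_val).subtype_mk _⟩

theorem geomRealizationSection_comp_pushforward_homotopic (Δ : Set (Finset W))
    (hs : Function.LeftInverse π s) :
    ((geomRealizationSection Δ hs).comp (geomRealizationPushforward Δ π)).Homotopic (.id _) := by
  refine homotopic_of_segment_subset _ _ fun f =>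
    (segment_subset_iff ℝ).2 fun a b ha hb hab => ?_
  obtain ⟨hf₀, hf₁, hfΔ⟩ := f.2
  set g := pushforward ℝ s (pushforward ℝ π f.1)
  change (∀ v, 0 ≤ (a • g + b • f.1) v) ∧ ∑ v, (a • g + b • f.1) v = 1 ∧
    ∃ t ∈ Finset.image π ⁻¹' Δ, Function.support (a • g + b • f.1) = ↑t
  have hg₀ : ∀ v, 0 ≤ g v := pushforward_nonneg s (pushforward_nonneg π hf₀)
  have h₀ : ∀ v, 0 ≤ (a • g + b • f.1) v :=
    fun v => add_nonneg (smul_nonneg ha (hg₀ v)) (smul_nonneg hb (hf₀ v))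
  have hπg : pushforward ℝ π (a • g + b • f.1) = pushforward ℝ π f.1 := by
    rw [map_add, map_smul, map_smul, pushforward_pushforward_of_leftInverse hs, ← add_smul, hab,
      one_smul]
  refine ⟨h₀, ?_, ?_⟩
  · simp [g, sum_add_distrib, ← mul_sum, sum_pushforward, hf₁, hab]
  · rw [exists_support_eq_mem_preimage_image_iff Δ π h₀, hπg]
    exact (exists_support_eq_mem_preimage_image_iff Δ π hf₀).1 hfΔ

noncomputable def geomRealizationPreimageImageHomotopyEquiv (Δ : Set (Finset W))
    (hs : Function.LeftInverse π s) :
    geomRealization (Finset.image π ⁻¹' Δ) ≃ₕ geomRealization Δ :=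
  .ofLeftInverse (geomRealizationPushforward Δ π) (geomRealizationSection Δ hs)
    (fun g => Subtype.ext (pushforward_pushforward_of_leftInverse hs g.1))
    (geomRealizationSection_comp_pushforward_homotopic Δ hs)

end

section
variable {W : Type*} [Fintype W]

theorem exists_support_eq_ne_univ_iff (g : W → ℝ) :
    (∃ s ∈ {τ : Finset W | τ ≠ univ}, Function.support g = ↑s) ↔ ∃ w, g w = 0 := by
  rw [exists_support_eq_mem_iff]
  simp [Finset.eq_univ_iff_forall]

variable [Nonempty W]

theorem Finset.inf'_univ_neg_of_sum_eq_zero {y : W → ℝ} (hsum : ∑ w, y w = 0) (hy : y ≠ 0) :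
    univ.inf' univ_nonempty y < 0 := by
  by_contra! h
  have hnonneg : ∀ w ∈ univ, 0 ≤ y w := fun w _ => h.trans (inf'_le _ (mem_univ w))
  exact hy (funext fun w => (sum_eq_zero_iff_of_nonneg hnonneg).1 hsum w (mem_univ w))

/-- Central projection, from the barycenter `(1/|W|, …, 1/|W|)`, of the point `barycenter + y` onto
the boundary of the standard simplex. -/
noncomputable def boundaryProjection (y : W → ℝ) : W → ℝ :=
  fun w => (Fintype.card W : ℝ)⁻¹ * (1 - y w / univ.inf' univ_nonempty y)

theorem boundaryProjection_mem {y : W → ℝ} (hsum : ∑ w, y w = 0) (hy : y ≠ 0) :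
    (∀ w, 0 ≤ boundaryProjection y w) ∧ ∑ w, boundaryProjection y w = 1 ∧
      ∃ s ∈ {τ : Finset W | τ ≠ univ}, Function.support (boundaryProjection y) = ↑s := by
  have hm := Finset.inf'_univ_neg_of_sum_eq_zero hsum hy
  refine ⟨fun w => mul_nonneg (by positivity) ?_, ?_, ?_⟩
  · rw [sub_nonneg, div_le_one_of_neg hm]
    exact inf'_le _ (mem_univ w)
  · simp only [boundaryProjection, ← mul_sum, sum_sub_distrib, ← sum_div, hsum]
    simp
  · obtain ⟨w, -, hw⟩ := exists_mem_eq_inf' univ_nonempty y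
    refine (exists_support_eq_ne_univ_iff _).2 ⟨w, ?_⟩
    simp [boundaryProjection, ← hw, hm.ne]

theorem continuous_boundaryProjection :
    Continuous fun y : {y : W → ℝ // ∑ w, y w = 0 ∧ y ≠ 0} => boundaryProjection y.1 := by
  have hm : Continuous fun y : {y : W → ℝ // ∑ w, y w = 0 ∧ y ≠ 0} =>
      univ.inf' univ_nonempty y.1 :=
    Continuous.finset_inf'_apply _ fun w _ => (continuous_apply w).comp continuous_subtype_val
  refine continuous_pi fun w => continuous_const.mul (continuous_const.sub ?_)
  exact ((continuous_apply w).comp continuous_subtype_val).div hm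
    fun y => (Finset.inf'_univ_neg_of_sum_eq_zero y.2.1 y.2.2).ne

noncomputable def boundaryProjectionMap :
    C({y : W → ℝ // ∑ w, y w = 0 ∧ y ≠ 0}, geomRealization {τ : Finset W | τ ≠ univ}) :=
  ⟨fun y => ⟨boundaryProjection y.1, boundaryProjection_mem y.2.1 y.2.2⟩,
    continuous_boundaryProjection.subtype_mk _⟩

noncomputable def subBarycenterMap :
    C(geomRealization {τ : Finset W | τ ≠ univ}, {y : W → ℝ // ∑ w, y w = 0 ∧ y ≠ 0}) :=
  ⟨fun g => ⟨fun w => g.1 w - (Fintype.card W : ℝ)⁻¹, by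
    obtain ⟨-, hg₁, hgΔ⟩ := g.2
    obtain ⟨w, hw⟩ := (exists_support_eq_ne_univ_iff _).1 hgΔ
    refine ⟨by simp [sum_sub_distrib, hg₁], fun h => ?_⟩
    simpa [hw] using congrFun h w⟩, by
      apply Continuous.subtype_mk
      exact continuous_pi fun w =>
        ((continuous_apply w).comp continuous_subtype_val).sub continuous_const⟩

theorem boundaryProjectionMap_subBarycenterMap (g : geomRealization {τ : Finset W | τ ≠ univ}) :
    boundaryProjectionMap (subBarycenterMap g) = g := by
  obtain ⟨hg₀, -, hgΔ⟩ := g.2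
  obtain ⟨w₀, hw₀⟩ := (exists_support_eq_ne_univ_iff _).1 hgΔ
  have hmin : univ.inf' univ_nonempty (fun w => g.1 w - (Fintype.card W : ℝ)⁻¹) =
      -(Fintype.card W : ℝ)⁻¹ :=
    le_antisymm ((inf'_le _ (mem_univ w₀)).trans_eq (by rw [hw₀, zero_sub]))
      (le_inf' _ _ fun w _ => by linarith [hg₀ w])
  ext w
  simp only [boundaryProjectionMap, subBarycenterMap, ContinuousMap.coe_mk, boundaryProjection,
    hmin]
  field_simp
  ring

theorem subBarycenterMap_comp_boundaryProjectionMap_homotopic :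
    (subBarycenterMap.comp boundaryProjectionMap).Homotopic
      (.id {y : W → ℝ // ∑ w, y w = 0 ∧ y ≠ 0}) := by
  refine homotopic_id_of_pos_smul
    (fun y hy r hr => ⟨by simp [← mul_sum, hy.1], smul_ne_zero hr.ne' hy.2⟩) _
    (fun y => -(Fintype.card W : ℝ)⁻¹ / univ.inf' univ_nonempty y.1)
    (fun y => div_pos_of_neg_of_neg (neg_neg_of_pos (by positivity))
      (Finset.inf'_univ_neg_of_sum_eq_zero y.2.1 y.2.2))
    fun y => ?_
  have := (Finset.inf'_univ_neg_of_sum_eq_zero y.2.1 y.2.2).ne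
  ext w
  simp only [ContinuousMap.comp_apply, boundaryProjectionMap, subBarycenterMap,
    ContinuousMap.coe_mk, boundaryProjection, Pi.smul_apply, smul_eq_mul]
  field_simp
  ring

noncomputable def geomRealizationBoundaryHomotopyEquiv :
    geomRealization {τ : Finset W | τ ≠ univ} ≃ₕ {y : W → ℝ // ∑ w, y w = 0 ∧ y ≠ 0} :=
  (HomotopyEquiv.ofLeftInverse boundaryProjectionMap subBarycenterMap
    boundaryProjectionMap_subBarycenterMap
    subBarycenterMap_comp_boundaryProjectionMap_homotopic).symm

end

theorem Fin.last_eq_neg_sum_init {p : ℕ} {y : Fin (p + 1) → ℝ} (hy : ∑ i, y i = 0) :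
    y (Fin.last p) = -∑ j, Fin.init y j := by
  rw [Fin.sum_univ_castSucc] at hy
  simp only [Fin.init]
  linarith

noncomputable def sumZeroHomeomorph (p : ℕ) :
    {y : Fin (p + 1) → ℝ // ∑ i, y i = 0 ∧ y ≠ 0} ≃ₜ {x : EuclideanSpace ℝ (Fin p) // x ≠ 0} where
  toFun y := ⟨WithLp.toLp 2 (Fin.init y.1), fun h => y.2.2 <| by
    have hinit : Fin.init y.1 = 0 := by simpa using congrArg WithLp.ofLp h
    rw [← Fin.snoc_init_self y.1, Fin.last_eq_neg_sum_init y.2.1, hinit]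
    ext i
    refine Fin.lastCases ?_ (fun j => ?_) i <;> simp⟩
  invFun x := ⟨Fin.snoc (α := fun _ => ℝ) x.1.ofLp (-∑ j, x.1 j), by
    refine ⟨by simp [Fin.sum_univ_castSucc], fun h => x.2 ?_⟩
    ext j
    simpa using congrFun h j.castSucc⟩
  left_inv y := by
    ext i
    simp only
    rw [← Fin.snoc_init_self y.1, Fin.last_eq_neg_sum_init y.2.1]
    simp
  right_inv x := by
    ext j
    simp
  continuous_toFun := by
    apply Continuous.subtype_mk
    fun_prop
  continuous_invFun := by
    apply Continuous.subtype_mk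
    fun_prop

theorem Nat.mod_eq_ite_of_lt_two_mul {x n : ℕ} (h : x < 2 * n) :
    x % n = if x < n then x else x - n := by
  split_ifs with hx
  · exact Nat.mod_eq_of_lt hx
  · rw [Nat.mod_eq_sub_mod (by omega), Nat.mod_eq_of_lt (by omega)]

theorem Nat.mod_eq_mod_iff_of_lt_two_mul {x y n : ℕ} (hx : x < 2 * n) (hy : y < 2 * n) :
    x % n = y % n ↔ x = y ∨ x = y + n ∨ y = x + n := by
  rw [Nat.mod_eq_ite_of_lt_two_mul hx, Nat.mod_eq_ite_of_lt_two_mul hy]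
  split_ifs <;> omega

theorem cyclePower_adj_iff {p : ℕ} {u v : Fin (2 * p + 2)} (huv : u ≠ v) :
    (cyclePower (2 * p + 2) p).Adj u v ↔ u.val % (p + 1) ≠ v.val % (p + 1) := by
  have hu := u.isLt
  have hv := v.isLt
  have huv' : u.val ≠ v.val := Fin.val_ne_of_ne huv
  have hmod : ∀ x < 2 * (2 * p + 2),
      x % (2 * p + 2) = if x < 2 * p + 2 then x else x - (2 * p + 2) :=
    fun x hx => Nat.mod_eq_ite_of_lt_two_mul hx
  simp only [cyclePower, ne_eq, huv, not_false_eq_true, true_and]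
  rw [Nat.mod_eq_mod_iff_of_lt_two_mul (by omega) (by omega)]
  constructor
  · rintro ⟨t, ht₁, ht₂, h | h⟩ <;> rw [hmod _ (by omega)] at h <;> split_ifs at h <;> omega
  · intro h
    rcases lt_or_gt_of_ne huv' with hlt | hlt
    · by_cases hd : v.val - u.val ≤ p
      · exact ⟨v - u, by omega, hd, Or.inl (by rw [hmod _ (by omega)]; split_ifs <;> omega)⟩
      · refine ⟨2 * p + 2 - (v - u), by omega, by omega, Or.inr ?_⟩
        rw [hmod _ (by omega)]; split_ifs <;> omega
    · by_cases hd : u.val - v.val ≤ p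
      · exact ⟨u - v, by omega, hd, Or.inr (by rw [hmod _ (by omega)]; split_ifs <;> omega)⟩
      · refine ⟨2 * p + 2 - (u - v), by omega, by omega, Or.inl ?_⟩
        rw [hmod _ (by omega)]; split_ifs <;> omega

def antipodalClass (p : ℕ) (u : Fin (2 * p + 2)) : Fin (p + 1) := Fin.ofNat (p + 1) u.val

theorem antipodalClass_leftInverse_castLE (p : ℕ) :
    Function.LeftInverse (antipodalClass p) (Fin.castLE (by omega)) :=
  fun w => by ext; simp [antipodalClass]

theorem totalCut2_cyclePower_eq (p : ℕ) :
    totalCut2 (cyclePower (2 * p + 2) p) = Finset.image (antipodalClass p) ⁻¹' {τ | τ ≠ univ} := by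
  ext σ
  simp only [totalCut2, antipodalClass, Set.mem_ofPred_eq, Set.mem_preimage, ne_eq,
    eq_univ_iff_forall, mem_image, not_forall, not_exists, not_and]
  constructor
  · rintro ⟨u, v, hu, hv, huv, hadj⟩
    refine ⟨Fin.ofNat (p + 1) u.val, fun x hx hxu => ?_⟩
    rw [cyclePower_adj_iff huv, not_not] at hadj
    have hxu' : x ≠ u := by rintro rfl; exact hu hx
    have hxv' : x ≠ v := by rintro rfl; exact hv hx
    simp only [Fin.ext_iff, Fin.val_ofNat] at hxu hxu' hxv' huv
    rw [Nat.mod_eq_mod_iff_of_lt_two_mul (by omega) (by omega)] at hxu hadj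
    omega
  · rintro ⟨w, hw⟩
    have hw' := w.isLt
    have hu : (⟨w, by omega⟩ : Fin (2 * p + 2)) ∉ σ := fun h => hw _ h (by ext; simp)
    have hv : (⟨w + (p + 1), by omega⟩ : Fin (2 * p + 2)) ∉ σ :=
      fun h => hw _ h (by ext; simp [Nat.mod_eq_of_lt hw'])
    refine ⟨_, _, hu, hv, by simp [Fin.ext_iff], ?_⟩
    rw [cyclePower_adj_iff (by simp [Fin.ext_iff]), not_not]
    simp

theorem stmt0_general (p : ℕ) :
    Nonempty (ContinuousMap.HomotopyEquiv
      (geomRealization (totalCut2 (cyclePower (2 * p + 2) p)))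
      (Metric.sphere (0 : EuclideanSpace ℝ (Fin p)) 1)) := by
  rw [totalCut2_cyclePower_eq]
  exact ⟨(geomRealizationPreimageImageHomotopyEquiv _ (antipodalClass_leftInverse_castLE p)).trans
    (geomRealizationBoundaryHomotopyEquiv.trans
      ((sumZeroHomeomorph p).toHomotopyEquiv.trans homotopyEquivUnitSphere))⟩

/-- For `p ≥ 1` and `n = 2p+2`, the total 2-cut complex of `C_n^p` is homotopy
equivalent to the sphere `S^{(n-4)/2} = S^{p-1}` (the unit sphere in `ℝ^p`). -/
theorem stmt0 (p : ℕ) (hp : 1 ≤ p) :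
    Nonempty (ContinuousMap.HomotopyEquiv
      (geomRealization (totalCut2 (cyclePower (2 * p + 2) p)))
      (Metric.sphere (0 : EuclideanSpace ℝ (Fin p)) 1)) :=
  stmt0_general p
end

section
/- Let G be a finite simple graph, u, v ∈ V(G) with u ≠ v, and σ a face of Δᵗ₂(G). If σ ∈ 𝒞 and σ ∪ {u} is a face of Δᵗ₂(G), then σ ∪ {u} ∈ 𝒞. -/
/-- For a fixed vertex `v`, the element matching `M_v` pairs `σ∖{v}` with `σ∪{v}`
whenever both are faces of the total 2-cut complex.  `criticalSet G v` (the set `𝒞`)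
consists of the faces of the total 2-cut complex lying in no pair of `M_v`;
a face `σ` lies in a pair of `M_v` exactly when both `σ∖{v}` and `σ∪{v}` are faces. -/
def criticalSet {V : Type*} [Fintype V] [DecidableEq V] (G : SimpleGraph V) (v : V) :
    Set (Finset V) :=
  {σ ∈ totalCut2 G | ¬(σ.erase v ∈ totalCut2 G ∧ insert v σ ∈ totalCut2 G)}


lemma totalCut2_mono {V : Type*} [Fintype V] [DecidableEq V] (G : SimpleGraph V)
    {σ τ : Finset V} (h : σ ⊆ τ) (hτ : τ ∈ totalCut2 G) : σ ∈ totalCut2 G := by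
  obtain ⟨a, b, ha, hb, hab, hadj⟩ := hτ
  exact ⟨a, b, fun h' => ha (h h'), fun h' => hb (h h'), hab, hadj⟩

/-- Proposition 3.3(ii): if `σ ∈ 𝒞` and `σ ∪ {u}` is a face of the total 2-cut
complex, then `σ ∪ {u} ∈ 𝒞`. -/
theorem stmt5 {V : Type*} [Fintype V] [DecidableEq V] (G : SimpleGraph V)
    (u v : V) (huv : u ≠ v) (σ : Finset V) (hσ : σ ∈ totalCut2 G)
    (hC : σ ∈ criticalSet G v) (hu : insert u σ ∈ totalCut2 G) :
    insert u σ ∈ criticalSet G v := by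
  obtain ⟨-, hC2⟩ := hC
  have hev : σ.erase v ∈ totalCut2 G := totalCut2_mono G (Finset.erase_subset v σ) hσ
  have hvσ : insert v σ ∉ totalCut2 G := fun h => hC2 ⟨hev, h⟩
  refine ⟨hu, fun ⟨_, h2⟩ => hvσ ?_⟩
  exact totalCut2_mono G (Finset.insert_subset_insert v (Finset.subset_insert u σ)) h2
end

section
/- Let p ≥ 1, n ≥ 2p+2, and 1 ≤ i ≤ p. For 1 ≤ i ≤ p set X_i = {i+p+1, i+p+2, …, i+n−p−1} ⊆ {0,…,n−1}. If σ ∈ 𝒞_i, then σ ∈ 𝒞_{i+1} if and only if {1, 2, …, i} ⊆ σ and X_i ⊄ σ. -/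
/-- Adjacency in the `p`-th power `C_n^p` of the cycle graph `C_n`, viewed on the
vertex set `{0, 1, …, n-1} ⊆ ℕ`: distinct `u, v < n` are adjacent iff
`v ≡ u ± t (mod n)` for some `1 ≤ t ≤ p`. -/
def adjCnp (n p : ℕ) (u v : ℕ) : Prop :=
  u < n ∧ v < n ∧ u ≠ v ∧
    ∃ t, 1 ≤ t ∧ t ≤ p ∧ ((u + t) % n = v ∨ (v + t) % n = u)

/-- The total 2-cut complex `Δᵗ₂(C_n^p)`: faces are the `σ ⊆ {0,…,n-1}` whose
complement `σᶜ = {0,…,n-1} ∖ σ` contains a disconnected 2-set, i.e. two distinct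
nonadjacent vertices. -/
def facesCnp (n p : ℕ) : Set (Finset ℕ) :=
  {σ | σ ⊆ Finset.range n ∧
    ∃ u ∈ Finset.range n \ σ, ∃ v ∈ Finset.range n \ σ, u ≠ v ∧ ¬ adjCnp n p u v}

/-- The sequence `𝒞₀, 𝒞₁, …` of sets of faces of `Δᵗ₂(C_n^p)` obtained from the
sequence of element matchings using the vertices `0, 1, …`: `𝒞₀` is the set of all
faces, and `𝒞_{i+1}` consists of those `σ ∈ 𝒞_i` lying in no pair of the matching
`M_i = { {σ∖{i}, σ∪{i}} : both σ∖{i} ∈ 𝒞_i and σ∪{i} ∈ 𝒞_i }`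
(a face `σ` lies in such a pair iff both `σ∖{i} ∈ 𝒞_i` and `σ∪{i} ∈ 𝒞_i`). -/
def matchSeqCnp (n p : ℕ) : ℕ → Set (Finset ℕ)
  | 0 => facesCnp n p
  | (i + 1) => {σ ∈ matchSeqCnp n p i |
      ¬(σ.erase i ∈ matchSeqCnp n p i ∧ insert i σ ∈ matchSeqCnp n p i)}

/- ---------- auxiliary material ---------- -/

/-- The complement of `σ` in `{0,…,n-1}` with `0` removed. -/
def Kc (n : ℕ) (σ : Finset ℕ) : Finset ℕ := (Finset.range n \ σ).erase 0

lemma mem_Kc {n : ℕ} {σ : Finset ℕ} {k : ℕ} :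
    k ∈ Kc n σ ↔ k ≠ 0 ∧ k < n ∧ k ∉ σ := by
  simp [Kc, Finset.mem_erase, Finset.mem_sdiff, Finset.mem_range, and_assoc]

/-- Invariant characterizing `𝒞_i` for `1 ≤ i ≤ p+1`. -/
def Pred (n p i : ℕ) (σ : Finset ℕ) : Prop :=
  σ ⊆ Finset.range n ∧ 0 ∉ σ ∧ Finset.Icc 1 (i - 1) ⊆ σ ∧
    (∀ u ∈ Kc n σ, ∀ v ∈ Kc n σ, u ≠ v → adjCnp n p u v) ∧
    ∀ j < i, ¬ Finset.Icc (j + p + 1) (j + n - p - 1) ⊆ σ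

lemma adj_symm {n p u v : ℕ} (h : adjCnp n p u v) : adjCnp n p v u := by
  obtain ⟨h1, h2, h3, t, ht1, ht2, h⟩ := h
  exact ⟨h2, h1, h3.symm, t, ht1, ht2, h.symm⟩

lemma adj_char {n p i k : ℕ} (hn : 2 * p + 2 ≤ n) (hip : i ≤ p)
    (hk1 : 1 ≤ k) (hkn : k < n) (hki : k ≠ i) :
    adjCnp n p i k ↔ ¬(i + p + 1 ≤ k ∧ k ≤ i + n - p - 1) := by
  constructor
  · rintro ⟨-, -, -, t, ht1, ht2, h | h⟩
    · rw [Nat.mod_eq_of_lt (by omega)] at h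
      omega
    · rcases Nat.lt_or_ge (k + t) n with hlt | hge
      · rw [Nat.mod_eq_of_lt hlt] at h; omega
      · rw [Nat.mod_eq_sub_mod hge, Nat.mod_eq_of_lt (by omega)] at h
        omega
  · intro hk
    refine ⟨by omega, hkn, fun h => hki h.symm, ?_⟩
    by_cases hlt : k < i
    · refine ⟨i - k, by omega, by omega, Or.inr ?_⟩
      have h1 : k + (i - k) = i := by omega
      rw [h1, Nat.mod_eq_of_lt (by omega)]
    · by_cases h2 : k ≤ i + p
      · refine ⟨k - i, by omega, by omega, Or.inl ?_⟩
        have h1 : i + (k - i) = k := by omega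
        rw [h1, Nat.mod_eq_of_lt hkn]
      · refine ⟨n + i - k, by omega, by omega, Or.inr ?_⟩
        have h1 : k + (n + i - k) = n + i := by omega
        rw [h1, Nat.add_mod_left, Nat.mod_eq_of_lt (by omega)]

lemma mem_matchSeq_succ {n p i : ℕ} {σ : Finset ℕ} :
    σ ∈ matchSeqCnp n p (i + 1) ↔ σ ∈ matchSeqCnp n p i ∧
      ¬(σ.erase i ∈ matchSeqCnp n p i ∧ insert i σ ∈ matchSeqCnp n p i) :=
  Iff.rfl

lemma faces_erase {n p : ℕ} {σ : Finset ℕ} (a : ℕ) (h : σ ∈ facesCnp n p) :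
    σ.erase a ∈ facesCnp n p := by
  obtain ⟨hsub, u, hu, v, hv, huv, hadj⟩ := h
  simp only [Finset.mem_sdiff] at hu hv
  refine ⟨(Finset.erase_subset a σ).trans hsub, u, ?_, v, ?_, huv, hadj⟩
  · exact Finset.mem_sdiff.2 ⟨hu.1, fun hx => hu.2 (Finset.mem_of_mem_erase hx)⟩
  · exact Finset.mem_sdiff.2 ⟨hv.1, fun hx => hv.2 (Finset.mem_of_mem_erase hx)⟩

lemma base_case {n p : ℕ} (hp : 1 ≤ p) (hn : 2 * p + 2 ≤ n) (σ : Finset ℕ) :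
    σ ∈ matchSeqCnp n p 1 ↔ Pred n p 1 σ := by
  have h0n : 0 < n := by omega
  have hKeq : Finset.range n \ insert 0 σ = Kc n σ := by
    ext k
    simp only [Kc, Finset.mem_sdiff, Finset.mem_range, Finset.mem_erase,
      Finset.mem_insert]
    tauto
  rw [mem_matchSeq_succ]
  constructor
  · rintro ⟨h1, h2⟩
    have h1' : σ ∈ facesCnp n p := h1
    have h0 : 0 ∉ σ := by
      intro h0
      exact h2 ⟨faces_erase 0 h1', by rwa [Finset.insert_eq_self.2 h0]⟩
    have hins : insert 0 σ ∉ facesCnp n p := fun hf => h2 ⟨faces_erase 0 h1', hf⟩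
    have hclq : ∀ u ∈ Kc n σ, ∀ v ∈ Kc n σ, u ≠ v → adjCnp n p u v := by
      intro u hu v hv huv
      by_contra hadj
      refine hins ⟨Finset.insert_subset (Finset.mem_range.2 h0n) h1'.1,
        u, ?_, v, ?_, huv, hadj⟩
      · rw [hKeq]; exact hu
      · rw [hKeq]; exact hv
    have hX : ¬ Finset.Icc (0 + p + 1) (0 + n - p - 1) ⊆ σ := by
      obtain ⟨hsub, u, hu, v, hv, huv, hadj⟩ := h1'
      simp only [Finset.mem_sdiff, Finset.mem_range] at hu hv
      rcases eq_or_ne u 0 with rfl | hu0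
      · intro hXs
        have hv0 : v ≠ 0 := fun h => huv h.symm
        have hadj' : adjCnp n p 0 v ↔ ¬(0 + p + 1 ≤ v ∧ v ≤ 0 + n - p - 1) :=
          adj_char hn (Nat.zero_le p) (by omega) hv.1 hv0
        have hvI : 0 + p + 1 ≤ v ∧ v ≤ 0 + n - p - 1 := by
          by_contra hc
          exact hadj (hadj'.2 hc)
        exact hv.2 (hXs (Finset.mem_Icc.2 hvI))
      · rcases eq_or_ne v 0 with rfl | hv0
        · intro hXs
          have hadj2 : ¬ adjCnp n p 0 u := fun h => hadj (adj_symm h)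
          have hadj' : adjCnp n p 0 u ↔ ¬(0 + p + 1 ≤ u ∧ u ≤ 0 + n - p - 1) :=
            adj_char hn (Nat.zero_le p) (by omega) hu.1 hu0
          have huI : 0 + p + 1 ≤ u ∧ u ≤ 0 + n - p - 1 := by
            by_contra hc
            exact hadj2 (hadj'.2 hc)
          exact hu.2 (hXs (Finset.mem_Icc.2 huI))
        · exact absurd (hclq u (mem_Kc.2 ⟨hu0, hu.1, hu.2⟩)
            v (mem_Kc.2 ⟨hv0, hv.1, hv.2⟩) huv) hadj
    refine ⟨h1'.1, h0, by simp, hclq, fun j hj => ?_⟩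
    have hj0 : j = 0 := by omega
    subst hj0
    exact hX
  · rintro ⟨hsub, h0, -, hclq, hX⟩
    have hX0 := hX 0 Nat.zero_lt_one
    obtain ⟨k, hkI, hkσ⟩ := Finset.not_subset.1 hX0
    rw [Finset.mem_Icc] at hkI
    have hfσ : σ ∈ facesCnp n p := by
      refine ⟨hsub, 0, Finset.mem_sdiff.2 ⟨Finset.mem_range.2 h0n, h0⟩,
        k, Finset.mem_sdiff.2 ⟨Finset.mem_range.2 (by omega), hkσ⟩, by omega, ?_⟩
      intro hadj
      exact absurd ((adj_char hn (Nat.zero_le p) (by omega) (by omega)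
        (by omega)).1 hadj) (by simp; omega)
    refine ⟨hfσ, ?_⟩
    rintro ⟨-, hins⟩
    obtain ⟨-, u, hu, v, hv, huv, hadj⟩ := hins
    rw [hKeq] at hu hv
    exact hadj (hclq u hu v hv huv)

lemma step_case {n p i : ℕ} (hp : 1 ≤ p) (hn : 2 * p + 2 ≤ n)
    (hi1 : 1 ≤ i) (hip : i ≤ p)
    (IH : ∀ τ, τ ∈ matchSeqCnp n p i ↔ Pred n p i τ) (σ : Finset ℕ) :
    σ ∈ matchSeqCnp n p (i + 1) ↔ Pred n p (i + 1) σ := by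
  have hin : i < n := by omega
  rw [mem_matchSeq_succ]
  simp only [IH]
  constructor
  · rintro ⟨⟨h1, h2, h3, h4, h5⟩, hnot⟩
    have hiσ : i ∈ σ := by
      by_contra hiσ
      apply hnot
      constructor
      · rw [Finset.erase_eq_of_notMem hiσ]; exact ⟨h1, h2, h3, h4, h5⟩
      · refine ⟨Finset.insert_subset (Finset.mem_range.2 hin) h1, ?_,
          h3.trans (Finset.subset_insert _ _), ?_, ?_⟩
        · intro h
          rcases Finset.mem_insert.1 h with h | h
          · omega
          · exact h2 h
        · intro u hu v hv huv
          obtain ⟨u0, un, unσ⟩ := mem_Kc.1 hu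
          obtain ⟨v0, vn, vnσ⟩ := mem_Kc.1 hv
          exact h4 u (mem_Kc.2 ⟨u0, un, fun h => unσ (Finset.mem_insert_of_mem h)⟩)
            v (mem_Kc.2 ⟨v0, vn, fun h => vnσ (Finset.mem_insert_of_mem h)⟩) huv
        · intro j hj hsub
          apply h5 j hj
          intro x hx
          have hxI := Finset.mem_Icc.1 hx
          have hxi : x ≠ i := by omega
          exact (Finset.mem_insert.1 (hsub hx)).resolve_left hxi
    have hXi : ¬ Finset.Icc (i + p + 1) (i + n - p - 1) ⊆ σ := by
      by_contra hXi
      apply hnot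
      refine ⟨?_, by rw [Finset.insert_eq_self.2 hiσ]; exact ⟨h1, h2, h3, h4, h5⟩⟩
      refine ⟨(Finset.erase_subset _ _).trans h1,
        fun h => h2 (Finset.mem_of_mem_erase h), ?_, ?_, ?_⟩
      · intro x hx
        have hxI := Finset.mem_Icc.1 hx
        exact Finset.mem_erase.2 ⟨by omega, h3 hx⟩
      · have hmem : ∀ u, u ∈ Kc n (σ.erase i) ↔ u = i ∨ u ∈ Kc n σ := by
          intro u
          rw [mem_Kc, mem_Kc]
          constructor
          · rintro ⟨u0, un, unσ⟩
            by_cases h : u = i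
            · exact Or.inl h
            · exact Or.inr ⟨u0, un, fun hu => unσ (Finset.mem_erase.2 ⟨h, hu⟩)⟩
          · rintro (hui | ⟨u0, un, unσ⟩)
            · subst hui
              exact ⟨by omega, hin, Finset.notMem_erase u σ⟩
            · exact ⟨u0, un, fun hu => unσ (Finset.mem_of_mem_erase hu)⟩
        have hadji : ∀ v ∈ Kc n σ, v ≠ i → adjCnp n p i v := by
          intro v hv hvi
          obtain ⟨v0, vn, vσ⟩ := mem_Kc.1 hv
          rw [adj_char hn hip (by omega) vn hvi]
          intro hvI
          exact vσ (hXi (Finset.mem_Icc.2 hvI))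
        intro u hu v hv huv
        rcases (hmem u).1 hu with rfl | huK
        · rcases (hmem v).1 hv with rfl | hvK
          · exact absurd rfl huv
          · exact hadji v hvK (fun h => huv h.symm)
        · rcases (hmem v).1 hv with rfl | hvK
          · exact adj_symm (hadji u huK huv)
          · exact h4 u huK v hvK huv
      · intro j hj hsub
        exact h5 j hj (fun x hx => Finset.mem_of_mem_erase (hsub hx))
    refine ⟨h1, h2, ?_, h4, ?_⟩
    · intro x hx
      have hxI := Finset.mem_Icc.1 hx
      rcases eq_or_ne x i with rfl | hxi
      · exact hiσ
      · exact h3 (Finset.mem_Icc.2 ⟨hxI.1, by omega⟩)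
    · intro j hj
      rcases eq_or_ne j i with rfl | hji
      · exact hXi
      · exact h5 j (by omega)
  · rintro ⟨h1, h2, h3, h4, h5⟩
    have hiσ : i ∈ σ := h3 (Finset.mem_Icc.2 ⟨hi1, by omega⟩)
    obtain ⟨k, hk1, hkσ⟩ := Finset.not_subset.1 (h5 i (by omega))
    have hkI := Finset.mem_Icc.1 hk1
    constructor
    · refine ⟨h1, h2, ?_, h4, fun j hj => h5 j (by omega)⟩
      intro x hx
      have hxI := Finset.mem_Icc.1 hx
      exact h3 (Finset.mem_Icc.2 ⟨hxI.1, by omega⟩)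
    · rintro ⟨⟨-, -, -, g4, -⟩, -⟩
      have hik : i ∈ Kc n (σ.erase i) :=
        mem_Kc.2 ⟨by omega, hin, Finset.notMem_erase i σ⟩
      have hkk : k ∈ Kc n (σ.erase i) :=
        mem_Kc.2 ⟨by omega, by omega, fun h => hkσ (Finset.mem_of_mem_erase h)⟩
      have hadj := g4 i hik k hkk (by omega)
      rw [adj_char hn hip (by omega) (by omega) (by omega)] at hadj
      exact hadj ⟨hkI.1, hkI.2⟩

lemma charAll {n p : ℕ} (hp : 1 ≤ p) (hn : 2 * p + 2 ≤ n) :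
    ∀ i, 1 ≤ i → i ≤ p + 1 →
      ∀ σ, (σ ∈ matchSeqCnp n p i ↔ Pred n p i σ) := by
  intro i
  induction i with
  | zero => omega
  | succ i ih =>
    intro _ hi2 σ
    rcases Nat.eq_zero_or_pos i with rfl | hi
    · exact base_case hp hn σ
    · exact step_case hp hn hi (by omega) (fun τ => ih hi (by omega) τ) σ

/-- Proposition 3.5: let `n ≥ 2p+2` and `1 ≤ i ≤ p`, and set
`X_i = {i+p+1, …, i+n-p-1}`.  If `σ ∈ 𝒞_i`, then `σ ∈ 𝒞_{i+1}` iff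
`{1, 2, …, i} ⊆ σ` and `X_i ⊄ σ`. -/
theorem stmt7 (p n i : ℕ) (hp : 1 ≤ p) (hn : 2 * p + 2 ≤ n)
    (hi1 : 1 ≤ i) (hi2 : i ≤ p) (σ : Finset ℕ) (hσ : σ ∈ matchSeqCnp n p i) :
    σ ∈ matchSeqCnp n p (i + 1) ↔
      (Finset.Icc 1 i ⊆ σ ∧ ¬ Finset.Icc (i + p + 1) (i + n - p - 1) ⊆ σ) := by
  have hPi : Pred n p i σ := (charAll hp hn i hi1 (by omega) σ).1 hσ
  obtain ⟨h1, h2, h3, h4, h5⟩ := hPi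
  rw [charAll hp hn (i + 1) (by omega) (by omega) σ]
  constructor
  · rintro ⟨-, -, g3, -, g5⟩
    exact ⟨g3, g5 i (by omega)⟩
  · rintro ⟨g1, g2⟩
    refine ⟨h1, h2, g1, h4, fun j hj => ?_⟩
    rcases eq_or_ne j i with rfl | hji
    · exact g2
    · exact h5 j (by omega)
end

section
/- Let p ≥ 1, n ≥ 3p+1, and σ ∈ 𝒞₁ with m_σ := max(σ^c). Suppose there exists a disconnected 2-set {0, v} in σ^c with v ≠ m_σ−p. Then σ ∉ 𝒞_{m_σ−p+1}. -/
lemma adjCnp_bound {n p u w : ℕ} (hpn : p < n) (h : adjCnp n p u w) (huw : u < w) :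
    w ≤ u + p ∨ u + n ≤ w + p := by
  obtain ⟨hun, hwn, hne, t, ht1, ht2, hc | hc⟩ := h
  · rcases Nat.lt_or_ge (u + t) n with h' | h'
    · rw [Nat.mod_eq_of_lt h'] at hc; omega
    · rw [Nat.mod_eq_sub_mod h', Nat.mod_eq_of_lt (by omega)] at hc; omega
  · rcases Nat.lt_or_ge (w + t) n with h' | h'
    · rw [Nat.mod_eq_of_lt h'] at hc; omega
    · rw [Nat.mod_eq_sub_mod h', Nat.mod_eq_of_lt (by omega)] at hc; omega

lemma adjCnp_close {n p u w : ℕ} (hu : u < n) (hw : w < n) (hne : u ≠ w)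
    (h1 : u ≤ w + p) (h2 : w ≤ u + p) : adjCnp n p u w := by
  refine ⟨hu, hw, hne, ?_⟩
  rcases Nat.lt_or_gt_of_ne hne with h' | h'
  · exact ⟨w - u, by omega, by omega,
      Or.inl (by rw [show u + (w - u) = w by omega, Nat.mod_eq_of_lt hw])⟩
  · exact ⟨u - w, by omega, by omega,
      Or.inr (by rw [show w + (u - w) = u by omega, Nat.mod_eq_of_lt hu])⟩

lemma not_adjCnp {n p u w : ℕ} (hpn : p < n) (huw : u < w) (h1 : u + p < w)
    (h2 : w + p < u + n) : ¬ adjCnp n p u w :=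
  fun h => by rcases adjCnp_bound hpn h huw with h' | h' <;> omega

lemma matchSeq_succ (n p i : ℕ) : matchSeqCnp n p (i + 1) =
    {σ ∈ matchSeqCnp n p i |
      ¬(σ.erase i ∈ matchSeqCnp n p i ∧ insert i σ ∈ matchSeqCnp n p i)} := rfl

lemma matchSeq_mono (n p : ℕ) {i j : ℕ} (h : i ≤ j) :
    matchSeqCnp n p j ⊆ matchSeqCnp n p i := by
  induction j with
  | zero => have : i = 0 := by omega
            subst this; exact fun _ h => h
  | succ k ih =>
    rcases Nat.eq_or_lt_of_le h with h' | h'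
    · subst h'; exact fun _ h => h
    · intro σ hσ
      rw [matchSeq_succ] at hσ
      exact ih (by omega) hσ.1


/-- Proposition 3.10: let `n ≥ 3p+1`, `σ ∈ 𝒞₁`, and `m_σ = max(σᶜ)`.  If there is
a disconnected 2-set `{0, v}` in `σᶜ` with `v ≠ m_σ - p`, then `σ ∉ 𝒞_{m_σ-p+1}`. -/
theorem stmt11 (p n : ℕ) (hp : 1 ≤ p) (hn : 3 * p + 1 ≤ n)
    (σ : Finset ℕ) (hσ : σ ∈ matchSeqCnp n p 1)
    (m : ℕ) (hm : (Finset.range n \ σ).max = (m : WithBot ℕ))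
    (v : ℕ) (h0 : 0 ∈ Finset.range n \ σ) (hv : v ∈ Finset.range n \ σ)
    (hv0 : v ≠ 0) (hnadj : ¬ adjCnp n p 0 v) (hvm : v ≠ m - p) :
    σ ∉ matchSeqCnp n p (m - p + 1) := by
  have hpn : p < n := by omega
  have hvn : v < n := by
    have := (Finset.mem_sdiff.mp hv).1; simpa using this
  have hvσ : v ∉ σ := (Finset.mem_sdiff.mp hv).2
  have h0σ : 0 ∉ σ := (Finset.mem_sdiff.mp h0).2
  -- unfold hσ
  rw [matchSeq_succ] at hσ
  obtain ⟨hσ0, hσ1⟩ := hσ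
  have hσF : σ ∈ facesCnp n p := hσ0
  obtain ⟨hσsub, -⟩ := hσF
  have hins : insert 0 σ ∉ facesCnp n p := fun h =>
    hσ1 ⟨by rwa [Finset.erase_eq_of_notMem h0σ], h⟩
  -- the clique property of σᶜ ∖ {0}
  have hclique : ∀ a b, a ∈ Finset.range n \ σ → b ∈ Finset.range n \ σ →
      a ≠ 0 → b ≠ 0 → a ≠ b → adjCnp n p a b := by
    intro a b ha hb ha0 hb0 hab
    by_contra hadj
    apply hins
    refine ⟨?_, a, ?_, b, ?_, hab, hadj⟩
    · intro x hx
      rcases Finset.mem_insert.mp hx with rfl | hx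
      · exact Finset.mem_range.mpr (by omega)
      · exact hσsub hx
    · simp only [Finset.mem_sdiff, Finset.mem_range, Finset.mem_insert, not_or] at ha ⊢
      exact ⟨ha.1, ha0, ha.2⟩
    · simp only [Finset.mem_sdiff, Finset.mem_range, Finset.mem_insert, not_or] at hb ⊢
      exact ⟨hb.1, hb0, hb.2⟩
  -- bounds on v from nonadjacency to 0
  have hv1 : p + 1 ≤ v := by
    by_contra h
    push_neg at h
    exact hnadj (adjCnp_close (by omega) hvn (Ne.symm hv0) (by omega) (by omega))
  have hv2 : v + p < n := by
    by_contra h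
    push_neg at h
    exact hnadj ⟨by omega, hvn, Ne.symm hv0, n - v, by omega, by omega,
      Or.inr (by rw [show v + (n - v) = n by omega, Nat.mod_self])⟩
  -- facts about m
  have hmmem : m ∈ Finset.range n \ σ := Finset.mem_of_max hm
  have hmn : m < n := by
    have := (Finset.mem_sdiff.mp hmmem).1; simpa using this
  have hmσ : m ∉ σ := (Finset.mem_sdiff.mp hmmem).2
  have hrange : ∀ x, x ∈ Finset.range n \ σ → x ≤ m := by
    intro x hx
    have := Finset.le_max hx
    rw [hm] at this
    exact WithBot.coe_le_coe.mp this
  have hvle : v ≤ m := hrange v hv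
  have hmv : m ≤ v + p := by
    rcases eq_or_lt_of_le hvle with rfl | hlt
    · omega
    · rcases adjCnp_bound hpn (hclique v m hv hmmem hv0 (by omega) (by omega)) hlt with h | h
      · omega
      · omega
  have hlow : ∀ k, k ∈ Finset.range n \ σ → k ≠ 0 → m ≤ k + p := by
    intro k hk hk0
    rcases eq_or_lt_of_le (hrange k hk) with rfl | hlt
    · omega
    · rcases adjCnp_bound hpn (hclique k m hk hmmem hk0 (by omega) (by omega)) hlt with h | h
      · omega
      · have hkv : k < v := by omega
        rcases adjCnp_bound hpn (hclique k v hk hv hk0 hv0 (by omega)) hkv with h2 | h2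
        · omega
        · omega
  set j := m - p with hjdef
  have hjp : j + p = m := by omega
  have hj1 : 1 ≤ j := by omega
  have hjn : j < n := by omega
  have hvj : j < v := by
    have := hlow v hv hv0
    omega
  have hvins : v ∉ insert j σ := by
    simp only [Finset.mem_insert, not_or]
    exact ⟨by omega, hvσ⟩
  have hmins : m ∉ insert j σ := by
    simp only [Finset.mem_insert, not_or]
    exact ⟨by omega, hmσ⟩
  have h0ins : 0 ∉ insert j σ := by
    simp only [Finset.mem_insert, not_or]
    exact ⟨by omega, h0σ⟩
  have hinssub : insert j σ ⊆ Finset.range n := by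
    intro x hx
    rcases Finset.mem_insert.mp hx with rfl | hx
    · exact Finset.mem_range.mpr hjn
    · exact hσsub hx
  -- the killing lemma
  have hkill : ∀ (τ : Finset ℕ), τ ⊆ insert j σ → ∀ i, 1 ≤ i → i < j →
      τ.erase i ∉ matchSeqCnp n p 1 := by
    intro τ hτ i hi1 hij hmem
    rw [matchSeq_succ] at hmem
    obtain ⟨hmem0, hnot⟩ := hmem
    apply hnot
    have h0τ : 0 ∉ τ.erase i := fun h => h0ins (hτ (Finset.mem_of_mem_erase h))
    have hiself : i ∉ Finset.erase τ i := Finset.notMem_erase i τ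
    refine ⟨by rwa [Finset.erase_eq_of_notMem h0τ], ?_⟩
    show insert 0 (τ.erase i) ∈ facesCnp n p
    have hvτ : v ∉ τ.erase i := fun h => hvins (hτ (Finset.mem_of_mem_erase h))
    have hmτ : m ∉ τ.erase i := fun h => hmins (hτ (Finset.mem_of_mem_erase h))
    refine ⟨?_, i, ?_, ?_⟩
    · intro x hx
      rcases Finset.mem_insert.mp hx with rfl | hx
      · exact Finset.mem_range.mpr (by omega)
      · exact hinssub (hτ (Finset.mem_of_mem_erase hx))
    · simp only [Finset.mem_sdiff, Finset.mem_range, Finset.mem_insert, not_or]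
      exact ⟨by omega, by omega, hiself⟩
    · by_cases hcase : i + n ≤ m + p
      · refine ⟨v, ?_, by omega, not_adjCnp hpn (by omega) (by omega) (by omega)⟩
        simp only [Finset.mem_sdiff, Finset.mem_range, Finset.mem_insert, not_or]
        exact ⟨hvn, hv0, hvτ⟩
      · refine ⟨m, ?_, by omega, not_adjCnp hpn (by omega) (by omega) (by omega)⟩
        simp only [Finset.mem_sdiff, Finset.mem_range, Finset.mem_insert, not_or]
        exact ⟨hmn, by omega, hmτ⟩
  -- survival lemma
  have hstay : ∀ (τ : Finset ℕ), τ ⊆ insert j σ → τ ∈ matchSeqCnp n p 1 →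
      τ ∈ matchSeqCnp n p j := by
    intro τ hτ hτ1
    have key : ∀ i, 1 ≤ i → i ≤ j → τ ∈ matchSeqCnp n p i := by
      intro i
      induction i with
      | zero => intro h; omega
      | succ k ih =>
        intro _ hkj
        rcases Nat.eq_zero_or_pos k with rfl | hk
        · exact hτ1
        · have hτk := ih (by omega) (by omega)
          rw [matchSeq_succ]
          refine ⟨hτk, ?_⟩
          rintro ⟨he, -⟩
          exact hkill τ hτ k hk (by omega) (matchSeq_mono n p hk he)
    exact key j hj1 le_rfl
  -- adjacency for everything in the "extended clique"
  have hadjall : ∀ u w : ℕ, u < n → w < n → u ≠ 0 → w ≠ 0 → u ≠ w →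
      (u ∉ σ ∨ u = j) → (w ∉ σ ∨ w = j) → adjCnp n p u w := by
    have hbnd : ∀ x : ℕ, x < n → x ≠ 0 → (x ∉ σ ∨ x = j) → j ≤ x ∧ x ≤ m := by
      intro x hxn hx0 hx
      rcases hx with hx | rfl
      · have hxm : x ∈ Finset.range n \ σ := by
          simp only [Finset.mem_sdiff, Finset.mem_range]; exact ⟨hxn, hx⟩
        exact ⟨by have := hlow x hxm hx0; omega, hrange x hxm⟩
      · omega
    intro u w hun hwn hu0 hw0 huw hu hw
    obtain ⟨h1, h2⟩ := hbnd u hun hu0 hu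
    obtain ⟨h3, h4⟩ := hbnd w hwn hw0 hw
    exact adjCnp_close hun hwn huw (by omega) (by omega)
  -- insert 0 ρ is not a face when ρᶜ ⊆ clique ∪ {j}
  have hins_not : ∀ ρ : Finset ℕ, (∀ x, x ∉ ρ → x ∉ σ ∨ x = j) →
      insert 0 ρ ∉ facesCnp n p := by
    rintro ρ hρ ⟨hsub, u, hu, w, hw, huw, hna⟩
    simp only [Finset.mem_sdiff, Finset.mem_range, Finset.mem_insert, not_or] at hu hw
    exact hna (hadjall u w hu.1 hw.1 hu.2.1 hw.2.1 huw (hρ u hu.2.2) (hρ w hw.2.2))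
  -- faces membership
  have hfaces : ∀ ρ : Finset ℕ, ρ ⊆ insert j σ → 0 ∉ ρ → v ∉ ρ → ρ ∈ facesCnp n p := by
    intro ρ hsub hρ0 hρv
    refine ⟨hsub.trans hinssub, 0, ?_, v, ?_, Ne.symm hv0, hnadj⟩
    · simp only [Finset.mem_sdiff, Finset.mem_range]
      exact ⟨by omega, hρ0⟩
    · simp only [Finset.mem_sdiff, Finset.mem_range]
      exact ⟨hvn, hρv⟩
  -- C1 membership criterion
  have hC1 : ∀ ρ : Finset ℕ, 0 ∉ ρ → ρ ∈ facesCnp n p → insert 0 ρ ∉ facesCnp n p →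
      ρ ∈ matchSeqCnp n p 1 := by
    intro ρ h0' hρ hinsρ
    rw [matchSeq_succ]
    exact ⟨hρ, fun h => hinsρ h.2⟩
  -- the two partners are in C_j
  have hτ1sub : σ.erase j ⊆ insert j σ :=
    (Finset.erase_subset j σ).trans (Finset.subset_insert j σ)
  have hτ1j : σ.erase j ∈ matchSeqCnp n p j := by
    apply hstay _ hτ1sub
    apply hC1
    · exact fun h => h0σ (Finset.mem_of_mem_erase h)
    · exact hfaces _ hτ1sub (fun h => h0σ (Finset.mem_of_mem_erase h))
        (fun h => hvσ (Finset.mem_of_mem_erase h))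
    · apply hins_not
      intro x hx
      simp only [Finset.mem_erase, not_and] at hx
      by_cases hxj : x = j
      · exact Or.inr hxj
      · exact Or.inl (fun hxσ => (hx hxj) hxσ)
  have hτ2j : insert j σ ∈ matchSeqCnp n p j := by
    apply hstay _ (le_refl (insert j σ))
    apply hC1
    · exact h0ins
    · exact hfaces _ (le_refl _) h0ins hvins
    · apply hins_not
      intro x hx
      simp only [Finset.mem_insert, not_or] at hx
      exact Or.inl hx.2
  intro hmem
  rw [show m - p + 1 = j + 1 from rfl, matchSeq_succ] at hmem
  exact hmem.2 ⟨hτ1j, hτ2j⟩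
end

section
/- Let p ≥ 1, n ≥ 3p+1, and let σ be a face of Δᵗ₂(C_n^p) with m_σ := max(σ^c). If {0, m_σ−p} is the only disconnected 2-set in σ^c, then m_σ ∈ {n−p, n−p+1, …, n−1}. -/
/-- Proposition 3.11(i): let `n ≥ 3p+1`, let `σ` be a face of `Δᵗ₂(C_n^p)` and
`m_σ = max(σᶜ)`.  If `{0, m_σ-p}` is the only disconnected 2-set in `σᶜ`
(i.e. every disconnected 2-set in `σᶜ` equals `{0, m_σ-p}`), then
`m_σ ∈ {n-p, n-p+1, …, n-1}`. -/
theorem stmt12 (p n : ℕ) (hp : 1 ≤ p) (hn : 3 * p + 1 ≤ n)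
    (σ : Finset ℕ) (hσ : σ ∈ facesCnp n p)
    (m : ℕ) (hm : (Finset.range n \ σ).max = (m : WithBot ℕ))
    (honly : ∀ u v : ℕ, u ∈ Finset.range n \ σ → v ∈ Finset.range n \ σ →
      u ≠ v → ¬ adjCnp n p u v → ({u, v} : Finset ℕ) = {0, m - p}) :
    n - p ≤ m ∧ m ≤ n - 1 := by
  obtain ⟨hsub, u, hu, v, hv, huv, hnadj⟩ := hσ
  have hmmem : m ∈ Finset.range n \ σ := Finset.mem_of_max hm
  have hmn : m < n := Finset.mem_range.mp (Finset.mem_sdiff.mp hmmem).1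
  have hun : u < n := Finset.mem_range.mp (Finset.mem_sdiff.mp hu).1
  have hvn : v < n := Finset.mem_range.mp (Finset.mem_sdiff.mp hv).1
  have hum : u ≤ m := by
    have := Finset.le_max hu; rw [hm] at this; exact WithBot.coe_le_coe.mp this
  have hvm : v ≤ m := by
    have := Finset.le_max hv; rw [hm] at this; exact WithBot.coe_le_coe.mp this
  -- m > p
  have hmp : p < m := by
    by_contra h
    push_neg at h
    apply hnadj
    refine ⟨hun, hvn, huv, ?_⟩
    rcases lt_or_gt_of_ne huv with hlt | hgt
    · exact ⟨v - u, by omega, by omega, Or.inl (by rw [Nat.mod_eq_of_lt] <;> omega)⟩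
    · exact ⟨u - v, by omega, by omega, Or.inr (by rw [Nat.mod_eq_of_lt] <;> omega)⟩
  -- 0 ∈ σᶜ
  have hset : ({u, v} : Finset ℕ) = {0, m - p} := honly u v hu hv huv hnadj
  have h0mem : (0 : ℕ) ∈ Finset.range n \ σ := by
    have : (0 : ℕ) ∈ ({u, v} : Finset ℕ) := by rw [hset]; simp
    simp only [Finset.mem_insert, Finset.mem_singleton] at this
    rcases this with h | h
    · rwa [← h] at hu
    · rwa [← h] at hv
  have h0m : (0 : ℕ) ≠ m := by omega
  -- 0 adjacent to m
  have hadj : adjCnp n p 0 m := by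
    by_contra hna
    have := honly 0 m h0mem hmmem h0m hna
    have hmmem2 : m ∈ ({0, m - p} : Finset ℕ) := by rw [← this]; simp
    simp only [Finset.mem_insert, Finset.mem_singleton] at hmmem2
    omega
  obtain ⟨-, -, -, t, ht1, htp, hcase⟩ := hadj
  rcases hcase with h | h
  · rw [Nat.zero_add, Nat.mod_eq_of_lt (by omega)] at h
    omega
  · have : (m + t) % n = 0 := h
    have hdvd : n ∣ m + t := Nat.dvd_of_mod_eq_zero this
    have h1 : n ≤ m + t := Nat.le_of_dvd (by omega) hdvd
    rw [Nat.mod_eq_sub_mod h1, Nat.mod_eq_of_lt (by omega)] at this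
    constructor <;> omega
end

section
/- Let p ≥ 1, n ≥ 3p+1, and let σ be a face of Δᵗ₂(C_n^p) with m_σ := max(σ^c). Then σ ∈ 𝒞_{n−p} if and only if {0, m_σ−p} is the only disconnected 2-set in σ^c. -/
namespace S13


/-- middle vertex: disconnected from 0 -/
def Mid (n p : ℕ) (τ : Finset ℕ) : Prop := ∃ v ∈ τ, p < v ∧ v + p < n

/-- all pairs of nonzero vertices of τ adjacent -/
def PairOK (n p : ℕ) (τ : Finset ℕ) : Prop :=
  ∀ u ∈ τ, ∀ v ∈ τ, 0 < u → u < v → v ≤ u + p ∨ u + n ≤ v + p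

def AP (n p i : ℕ) (τ : Finset ℕ) : Prop :=
  0 ∈ τ ∧ Mid n p τ ∧ PairOK n p τ ∧ ∃ w ∈ τ, p + i ≤ w

def KP (n p : ℕ) (τ : Finset ℕ) : Prop :=
  0 ∈ τ ∧ ∃ m ∈ τ, (∀ w ∈ τ, w ≤ m) ∧ n ≤ m + p ∧ m - p ∈ τ ∧
    ∀ w ∈ τ, w = 0 ∨ w = m - p ∨ n ≤ w + p

theorem adj_iff {n p u v : ℕ} (hn : p < n) (hu : u < n) (hv : v < n) (huv : u < v) :
    adjCnp n p u v ↔ (v ≤ u + p ∨ u + n ≤ v + p) := by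
  constructor
  · rintro ⟨-, -, -, t, ht1, ht2, h | h⟩
    · rcases lt_or_ge (u + t) n with hlt | hge
      · rw [Nat.mod_eq_of_lt hlt] at h; omega
      · rw [Nat.mod_eq_sub_mod hge, Nat.mod_eq_of_lt (by omega)] at h; omega
    · rcases lt_or_ge (v + t) n with hlt | hge
      · rw [Nat.mod_eq_of_lt hlt] at h; omega
      · rw [Nat.mod_eq_sub_mod hge, Nat.mod_eq_of_lt (by omega)] at h; omega
  · rintro (h | h)
    · exact ⟨hu, hv, by omega, v - u, by omega, by omega,
        Or.inl (by rw [Nat.mod_eq_of_lt (by omega)]; omega)⟩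
    · exact ⟨hu, hv, by omega, u + n - v, by omega, by omega,
        Or.inr (by rw [show v + (u + n - v) = u + n by omega,
          Nat.mod_eq_sub_mod (by omega), Nat.mod_eq_of_lt (by omega)]; omega)⟩

theorem notadj_iff {n p u v : ℕ} (hn : p < n) (hu : u < n) (hv : v < n) (huv : u < v) :
    ¬ adjCnp n p u v ↔ (u + p < v ∧ v + p < u + n) := by
  rw [adj_iff hn hu hv huv]; omega

theorem faces_iff {n p : ℕ} (hn : p < n) (σ : Finset ℕ) :
    σ ∈ facesCnp n p ↔ σ ⊆ Finset.range n ∧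
      ∃ u ∈ Finset.range n \ σ, ∃ v ∈ Finset.range n \ σ,
        u < v ∧ u + p < v ∧ v + p < u + n := by
  constructor
  · rintro ⟨hsub, u, hu, v, hv, huv, hadj⟩
    refine ⟨hsub, ?_⟩
    have hun : u < n := by simpa using (Finset.mem_sdiff.mp hu).1
    have hvn : v < n := by simpa using (Finset.mem_sdiff.mp hv).1
    rcases lt_or_gt_of_ne huv with h | h
    · exact ⟨u, hu, v, hv, h, (notadj_iff hn hun hvn h).mp hadj⟩
    · refine ⟨v, hv, u, hu, h, (notadj_iff hn hvn hun h).mp ?_⟩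
      intro ⟨h1, h2, h3, t, ht⟩; exact hadj ⟨h2, h1, huv, t, by tauto⟩
  · rintro ⟨hsub, u, hu, v, hv, h1, h2, h3⟩
    have hun : u < n := by simpa using (Finset.mem_sdiff.mp hu).1
    have hvn : v < n := by simpa using (Finset.mem_sdiff.mp hv).1
    exact ⟨hsub, u, hu, v, hv, by omega, (notadj_iff hn hun hvn h1).mpr ⟨h2, h3⟩⟩

theorem compl_erase {n i : ℕ} (hi : i < n) (σ : Finset ℕ) :
    Finset.range n \ (σ.erase i) = insert i (Finset.range n \ σ) := by
  ext x
  simp only [Finset.mem_sdiff, Finset.mem_erase, Finset.mem_insert, Finset.mem_range]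
  constructor
  · rintro ⟨h1, h2⟩; by_cases hx : x = i; · exact Or.inl hx
    · exact Or.inr ⟨h1, fun hs => h2 ⟨hx, hs⟩⟩
  · rintro (rfl | ⟨h1, h2⟩); · exact ⟨hi, fun h => h.1 rfl⟩
    · exact ⟨h1, fun h => h2 h.2⟩

theorem compl_insert {n i : ℕ} (σ : Finset ℕ) :
    Finset.range n \ (insert i σ) = (Finset.range n \ σ).erase i := by
  ext x
  simp only [Finset.mem_sdiff, Finset.mem_erase, Finset.mem_insert, Finset.mem_range]
  tauto

/-- KP has a (unique) middle vertex, namely m - p -/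
theorem KP_mid {n p : ℕ} (hp : 1 ≤ p) (hn : 3 * p + 1 ≤ n) {τ : Finset ℕ}
    (hτ : ∀ w ∈ τ, w < n) (hK : KP n p τ) : Mid n p τ := by
  obtain ⟨h0, m, hm, hmax, hmp, hmpm, htri⟩ := hK
  exact ⟨m - p, hmpm, by have := hτ m hm; omega, by have := hτ m hm; omega⟩

theorem KP_imp_AP1 {n p : ℕ} (hp : 1 ≤ p) (hn : 3 * p + 1 ≤ n) {τ : Finset ℕ}
    (hτ : ∀ w ∈ τ, w < n) (hK : KP n p τ) : AP n p 1 τ := by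
  obtain ⟨h0, m, hm, hmax, hmn, hmpm, htri⟩ := hK
  have hmn' : m < n := hτ m hm
  refine ⟨h0, KP_mid hp hn hτ ⟨h0, m, hm, hmax, hmn, hmpm, htri⟩, ?_, m, hm, by omega⟩
  intro u hu v hv hu0 huv
  have h1 := htri u hu; have h2 := htri v hv
  have := hmax u hu; have := hmax v hv
  omega


theorem notAPKP_of_no_mid {n p i : ℕ} (hp : 1 ≤ p) (hn : 3 * p + 1 ≤ n) {τ : Finset ℕ}
    (hτ : ∀ w ∈ τ, w < n) (h : ¬ Mid n p τ) : ¬(AP n p i τ ∨ KP n p τ) := by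
  rintro (⟨-, hm, -⟩ | hK)
  · exact h hm
  · exact h (KP_mid hp hn hτ hK)

theorem step_tau {n p i : ℕ} (hp : 1 ≤ p) (hn : 3 * p + 1 ≤ n)
    (hi1 : 1 ≤ i) (hi2 : i + p + 1 ≤ n) {τ : Finset ℕ} (hτ : ∀ w ∈ τ, w < n) :
    ((AP n p i τ ∨ KP n p τ) ∧
      ¬((AP n p i (insert i τ) ∨ KP n p (insert i τ)) ∧
        (AP n p i (τ.erase i) ∨ KP n p (τ.erase i)))) ↔
    (AP n p (i + 1) τ ∨ KP n p τ) := by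
  have hτe : ∀ w ∈ τ.erase i, w < n := fun w hw => hτ w (Finset.mem_of_mem_erase hw)
  constructor
  · rintro ⟨hA | hK, hns⟩
    · -- σ ∈ A_i; show A_{i+1} ∨ K
      by_contra hcon
      push_neg at hcon
      obtain ⟨hnA1, hnK⟩ := hcon
      obtain ⟨h0, ⟨v₀, hv₀, hv₀1, hv₀2⟩, hP, w₁, hw₁, hw₁'⟩ := hA
      -- upper bound p + i on τ
      have hub : ∀ w ∈ τ, w ≤ p + i := by
        intro w hw
        by_contra hc
        exact hnA1 ⟨h0, ⟨v₀, hv₀, hv₀1, hv₀2⟩, hP, w, hw, by omega⟩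
      have hw₁m : w₁ = p + i := by have := hub w₁ hw₁; omega
      subst hw₁m
      apply hns
      constructor
      · -- insert i τ ∈ A_i
        by_cases hiτ : i ∈ τ
        · rw [Finset.insert_eq_self.mpr hiτ]
          exact Or.inl ⟨h0, ⟨v₀, hv₀, hv₀1, hv₀2⟩, hP, p + i, hw₁, le_refl _⟩
        · refine Or.inl ⟨Finset.mem_insert_of_mem h0,
            ⟨v₀, Finset.mem_insert_of_mem hv₀, hv₀1, hv₀2⟩, ?_,
            p + i, Finset.mem_insert_of_mem hw₁, le_refl _⟩
          intro u hu v hv hu0 huv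
          rcases Finset.mem_insert.mp hu with hui | hu'
          · rcases Finset.mem_insert.mp hv with hvi | hv'
            · omega
            · have := hub v hv'; omega
          · rcases Finset.mem_insert.mp hv with hvi | hv'
            · -- u ∈ τ, u < i : the hard case
              by_contra hc
              push_neg at hc
              have h1 := hP u hu' (p + i) hw₁ hu0 (by omega)
              have hu2 : u + n ≤ p + i + p := by omega
              have h2 := hP u hu' v₀ hv₀ hu0 (by omega)
              have h3 := hP v₀ hv₀ (p + i) hw₁ (by omega) (by omega)
              omega
            · exact hP u hu' v hv' hu0 huv
      · -- erase i τ ∈ A_i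
        by_cases hiτ : i ∈ τ
        · -- need a middle ≠ i, else KP τ
          by_cases hex : ∃ v ∈ τ, v ≠ i ∧ p < v ∧ v + p < n
          · obtain ⟨v, hv, hvi, hv1, hv2⟩ := hex
            refine Or.inl ⟨Finset.mem_erase.mpr ⟨by omega, h0⟩,
              ⟨v, Finset.mem_erase.mpr ⟨hvi, hv⟩, hv1, hv2⟩,
              fun u hu v' hv' => hP u (Finset.mem_of_mem_erase hu) v' (Finset.mem_of_mem_erase hv'),
              p + i, Finset.mem_erase.mpr ⟨by omega, hw₁⟩, le_refl _⟩
          · exfalso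
            push_neg at hex
            have hno : ∀ v ∈ τ, p < v → v + p < n → v = i := fun v hv h1 h2 => by
              by_contra hc; exact absurd h2 (by simpa using hex v hv hc h1)
            apply hnK
            have hmn : n ≤ p + i + p := by
              by_contra hc
              have := hno (p + i) hw₁ (by omega) (by omega)
              omega
            refine ⟨h0, p + i, hw₁, hub, by omega, by
              have : p + i - p = i := by omega
              rw [this]; exact hiτ, ?_⟩
            intro w hw
            by_contra hc
            push_neg at hc
            obtain ⟨hw0, hwi, hwn⟩ := hc
            have hwip : p + i - p = i := by omega
            rw [hwip] at hwi
            have hwle : w ≤ p := by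
              by_contra hc2
              exact hwi (hno w hw (by omega) (by omega))
            have h1 := hP w hw (p + i) hw₁ (by omega) (by omega)
            have h2 := hP w hw v₀ hv₀ (by omega) (by omega)
            have h3 := hP v₀ hv₀ (p + i) hw₁ (by omega) (by omega)
            omega
        · rw [Finset.erase_eq_of_notMem hiτ]
          exact Or.inl ⟨h0, ⟨v₀, hv₀, hv₀1, hv₀2⟩, hP, p + i, hw₁, le_refl _⟩
    · exact Or.inr hK
  · rintro (hA | hK)
    · -- A_{i+1} survives
      obtain ⟨h0, ⟨v₀, hv₀, hv₀1, hv₀2⟩, hP, w₀, hw₀, hw₀'⟩ := hA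
      refine ⟨Or.inl ⟨h0, ⟨v₀, hv₀, hv₀1, hv₀2⟩, hP, w₀, hw₀, by omega⟩, ?_⟩
      rintro ⟨hL, hR⟩
      by_cases hiτ : i ∈ τ
      · -- show τ.erase i has no middle
        refine notAPKP_of_no_mid hp hn hτe ?_ hR
        rintro ⟨v, hv, hv1, hv2⟩
        have hvτ := Finset.mem_of_mem_erase hv
        have hvi := (Finset.mem_erase.mp hv).1
        have hA1 := hP i hiτ w₀ hw₀ (by omega) (by omega)
        have hvw : v ≠ w₀ := by have := hτ w₀ hw₀; omega
        have hA2 := hP v hvτ w₀ hw₀ (by omega) (by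
          have := hτ w₀ hw₀; omega)
        have hA3 := hP i hiτ v hvτ (by omega) (by have := hτ w₀ hw₀; omega)
        have := hτ w₀ hw₀
        omega
      · -- i ∉ τ : refute hL
        rcases hL with hLA | hLK
        · -- find w ∈ τ with i + p < w ∧ w + p < i + n
          have hww : ∃ w ∈ τ, i + p < w ∧ w + p < i + n := by
            by_cases hc : w₀ + p < i + n
            · exact ⟨w₀, hw₀, by omega, hc⟩
            · refine ⟨v₀, hv₀, ?_, by omega⟩
              by_contra hc2
              have hwn := hτ w₀ hw₀
              have hvw : v₀ ≠ w₀ := by omega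
              have hA2 := hP v₀ hv₀ w₀ hw₀ (by omega) (by omega)
              omega
          obtain ⟨w, hw, hw1, hw2⟩ := hww
          obtain ⟨-, -, hP', -⟩ := hLA
          have := hP' i (Finset.mem_insert_self i τ) w (Finset.mem_insert_of_mem hw)
            (by omega) (by omega)
          omega
        · -- refute KP (insert i τ)
          obtain ⟨-, m', hm', hmax', hmn', hmp', htri'⟩ := hLK
          have hi := htri' i (Finset.mem_insert_self i τ)
          have him : i = m' - p := by omega
          have hvne : v₀ ≠ i := fun h => hiτ (h ▸ hv₀)
          have hv0' := htri' v₀ (Finset.mem_insert_of_mem hv₀)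
          have hm'n : m' < n := by
            rcases Finset.mem_insert.mp hm' with rfl | h
            · omega
            · exact hτ m' h
          omega
    · -- K survives
      obtain ⟨h0, m, hm, hmax, hmn, hmpm, htri⟩ := hK
      have hmlt : m < n := hτ m hm
      refine ⟨Or.inr ⟨h0, m, hm, hmax, hmn, hmpm, htri⟩, ?_⟩
      rintro ⟨hL, hR⟩
      by_cases hiτ : i ∈ τ
      · -- i = m - p; τ.erase i has no middle
        have him : i = m - p := by
          have := htri i hiτ; omega
        refine notAPKP_of_no_mid hp hn hτe ?_ hR
        rintro ⟨v, hv, hv1, hv2⟩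
        have hvτ := Finset.mem_of_mem_erase hv
        have hvi := (Finset.mem_erase.mp hv).1
        have := htri v hvτ
        omega
      · -- i ≠ m - p; refute hL
        have him : i ≠ m - p := fun h => hiτ (h ▸ hmpm)
        rcases hL with hLA | hLK
        · obtain ⟨-, -, hP', w', hw', hw''⟩ := hLA
          by_cases hcase : i < m - p
          · -- pair (i, m) or (i, m-p) violates PairOK of insert i τ
            by_cases hc : m + p < i + n
            · have := hP' i (Finset.mem_insert_self i τ) m (Finset.mem_insert_of_mem hm)
                (by omega) (by omega)
              omega
            · have := hP' i (Finset.mem_insert_self i τ) (m - p)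
                (Finset.mem_insert_of_mem hmpm) (by omega) (by omega)
              omega
          · -- i > m - p : max condition of AP fails
            rcases Finset.mem_insert.mp hw' with rfl | h
            · omega
            · have := hmax w' h; omega
        · obtain ⟨-, m', hm', hmax', hmn', hmp', htri'⟩ := hLK
          have hi := htri' i (Finset.mem_insert_self i τ)
          have hm'm : m' = m := by
            rcases Finset.mem_insert.mp hm' with rfl | h
            · omega
            · have h1 := hmax m' h
              have h2 := hmax' m (Finset.mem_insert_of_mem hm)
              omega
          omega


theorem adj_symm {n p u v : ℕ} : adjCnp n p u v ↔ adjCnp n p v u :=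
  ⟨fun ⟨a, b, c, t, h1, h2, h3⟩ => ⟨b, a, c.symm, t, h1, h2, h3.symm⟩,
   fun ⟨a, b, c, t, h1, h2, h3⟩ => ⟨b, a, c.symm, t, h1, h2, h3.symm⟩⟩

def Sset (n p i : ℕ) : Set (Finset ℕ) :=
  {σ | σ ⊆ Finset.range n ∧
    (AP n p i (Finset.range n \ σ) ∨ KP n p (Finset.range n \ σ))}

theorem base_case {n p : ℕ} (hp : 1 ≤ p) (hn : 3 * p + 1 ≤ n) :
    matchSeqCnp n p 1 = Sset n p 1 := by
  have hpn : p < n := by omega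
  ext σ
  show (σ ∈ facesCnp n p ∧ ¬(σ.erase 0 ∈ facesCnp n p ∧ insert 0 σ ∈ facesCnp n p)) ↔ _
  rw [faces_iff hpn, faces_iff hpn, faces_iff hpn]
  constructor
  · rintro ⟨⟨hsub, u, hu, v, hv, h1, h2, h3⟩, hns⟩
    have hun : u < n := by simpa using (Finset.mem_sdiff.mp hu).1
    have hvn : v < n := by simpa using (Finset.mem_sdiff.mp hv).1
    -- σ.erase 0 is always a face
    have hface0 : σ.erase 0 ⊆ Finset.range n ∧ ∃ u' ∈ Finset.range n \ σ.erase 0,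
        ∃ v' ∈ Finset.range n \ σ.erase 0, u' < v' ∧ u' + p < v' ∧ v' + p < u' + n := by
      rw [compl_erase (by omega) σ]
      exact ⟨(Finset.erase_subset _ _).trans hsub,
        u, Finset.mem_insert_of_mem hu, v, Finset.mem_insert_of_mem hv, h1, h2, h3⟩
    have hkey : ¬(insert 0 σ ⊆ Finset.range n ∧ ∃ u' ∈ Finset.range n \ insert 0 σ,
        ∃ v' ∈ Finset.range n \ insert 0 σ, u' < v' ∧ u' + p < v' ∧ v' + p < u' + n) :=
      fun h => hns ⟨hface0, h⟩
    rw [compl_insert] at hkey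
    have hins : insert 0 σ ⊆ Finset.range n := by
      intro x hx
      rcases Finset.mem_insert.mp hx with rfl | hx'
      · simp; omega
      · exact hsub hx'
    have hnod : ∀ u' ∈ Finset.range n \ σ, ∀ v' ∈ Finset.range n \ σ,
        0 < u' → u' < v' → v' ≤ u' + p ∨ u' + n ≤ v' + p := by
      intro u' hu' v' hv' h0' hlt
      by_contra hc
      push_neg at hc
      exact hkey ⟨hins, u', Finset.mem_erase.mpr ⟨by omega, hu'⟩,
        v', Finset.mem_erase.mpr ⟨by omega, hv'⟩, hlt, by omega, by omega⟩
    have hu0 : u = 0 := by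
      by_contra hc
      have := hnod u hu v hv (by omega) h1
      omega
    subst hu0
    exact ⟨hsub, Or.inl ⟨hu, ⟨v, hv, by omega, by omega⟩, hnod, v, hv, by omega⟩⟩
  · rintro ⟨hsub, hAK⟩
    have hA : AP n p 1 (Finset.range n \ σ) := by
      rcases hAK with h | h
      · exact h
      · exact KP_imp_AP1 hp hn (fun w hw => by simpa using (Finset.mem_sdiff.mp hw).1) h
    obtain ⟨h0, ⟨v₀, hv₀, hv₀1, hv₀2⟩, hP, -⟩ := hA
    refine ⟨⟨hsub, 0, h0, v₀, hv₀, by omega, by omega, by omega⟩, ?_⟩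
    rintro ⟨-, -, u', hu', v', hv', hlt, hd1, hd2⟩
    rw [compl_insert] at hu' hv'
    have hu'0 := (Finset.mem_erase.mp hu').1
    have hv'0 := (Finset.mem_erase.mp hv').1
    have := hP u' (Finset.mem_of_mem_erase hu') v' (Finset.mem_of_mem_erase hv')
      (by omega) hlt
    omega

theorem inv {n p : ℕ} (hp : 1 ≤ p) (hn : 3 * p + 1 ≤ n) :
    ∀ i, 1 ≤ i → i + p ≤ n → matchSeqCnp n p i = Sset n p i := by
  intro i
  induction i with
  | zero => omega
  | succ i ih =>
    intro _ hin
    rcases Nat.eq_zero_or_pos i with rfl | hi1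
    · exact base_case hp hn
    · have hIH := ih hi1 (by omega)
      have hiln : i < n := by omega
      ext σ
      show (σ ∈ matchSeqCnp n p i ∧
        ¬(σ.erase i ∈ matchSeqCnp n p i ∧ insert i σ ∈ matchSeqCnp n p i)) ↔ _
      rw [hIH]
      have hτ : ∀ w ∈ Finset.range n \ σ, w < n :=
        fun w hw => by simpa using (Finset.mem_sdiff.mp hw).1
      have hstep := step_tau (n := n) (p := p) (i := i) hp hn hi1 (by omega) hτ
      constructor
      · rintro ⟨⟨hsub, hAK⟩, hns⟩
        refine ⟨hsub, hstep.mp ⟨hAK, ?_⟩⟩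
        rintro ⟨hL, hR⟩
        refine hns ⟨⟨(Finset.erase_subset _ _).trans hsub, ?_⟩,
          ⟨?_, ?_⟩⟩
        · rw [compl_erase hiln]; exact hL
        · intro x hx
          rcases Finset.mem_insert.mp hx with rfl | hx'
          · simp; omega
          · exact hsub hx'
        · rw [compl_insert]; exact hR
      · rintro ⟨hsub, hAK⟩
        obtain ⟨h1, h2⟩ := hstep.mpr hAK
        refine ⟨⟨hsub, h1⟩, ?_⟩
        rintro ⟨⟨-, hB⟩, ⟨-, hC⟩⟩
        rw [compl_erase hiln] at hB
        rw [compl_insert] at hC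
        exact h2 ⟨hB, hC⟩

end S13


/-- Proposition 3.11(ii): let `n ≥ 3p+1`, let `σ` be a face of `Δᵗ₂(C_n^p)` and
`m_σ = max(σᶜ)`.  Then `σ ∈ 𝒞_{n-p}` iff `{0, m_σ-p}` is the only disconnected
2-set in `σᶜ` (i.e. every disconnected 2-set in `σᶜ` equals `{0, m_σ-p}`;
since `σ` is a face, `σᶜ` does contain a disconnected 2-set). -/
theorem stmt13 (p n : ℕ) (hp : 1 ≤ p) (hn : 3 * p + 1 ≤ n)
    (σ : Finset ℕ) (hσ : σ ∈ facesCnp n p)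
    (m : ℕ) (hm : (Finset.range n \ σ).max = (m : WithBot ℕ)) :
    σ ∈ matchSeqCnp n p (n - p) ↔
      ∀ u v : ℕ, u ∈ Finset.range n \ σ → v ∈ Finset.range n \ σ →
        u ≠ v → ¬ adjCnp n p u v → ({u, v} : Finset ℕ) = {0, m - p} := by
  have hpn : p < n := by omega
  set τ := Finset.range n \ σ with hτdef
  have hτ : ∀ w ∈ τ, w < n := fun w hw => by simpa using (Finset.mem_sdiff.mp hw).1
  have hmτ : m ∈ τ := Finset.mem_of_max hm
  have hmax : ∀ w ∈ τ, w ≤ m := by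
    intro w hw
    have h := Finset.le_max hw
    rw [hm] at h
    exact WithBot.coe_le_coe.mp h
  have hmn : m < n := hτ m hmτ
  have hinv := S13.inv hp hn (n - p) (by omega) (by omega)
  rw [hinv]
  have hmem : σ ∈ S13.Sset n p (n - p) ↔ S13.KP n p τ := by
    constructor
    · rintro ⟨-, hA | hK⟩
      · obtain ⟨-, -, -, w, hw, hw'⟩ := hA
        have := hτ w hw
        omega
      · exact hK
    · intro hK
      exact ⟨hσ.1, Or.inr hK⟩
  rw [hmem]
  constructor
  · -- KP → every disconnected pair is {0, m-p}
    rintro ⟨h0, m', hm', hmax', hmn', hmp', htri'⟩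
    have hm'm : m' = m := le_antisymm (hmax m' hm') (hmax' m hmτ)
    have key : ∀ a b, a ∈ τ → b ∈ τ → a < b → a + p < b → b + p < a + n →
        a = 0 ∧ b = m - p := by
      intro a b ha hb h1 h2 h3
      have t1 := htri' a ha
      have t2 := htri' b hb
      have := hmax a ha
      have := hmax b hb
      omega
    intro u v hu hv hne hnadj
    have hun := hτ u hu
    have hvn := hτ v hv
    rcases lt_or_gt_of_ne hne with hlt | hlt
    · obtain ⟨h1, h2⟩ := (S13.notadj_iff hpn hun hvn hlt).mp hnadj
      obtain ⟨e1, e2⟩ := key u v hu hv hlt h1 h2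
      rw [e1, e2]
    · obtain ⟨h1, h2⟩ := (S13.notadj_iff hpn hvn hun hlt).mp
        (fun h => hnadj (S13.adj_symm.mp h))
      obtain ⟨e1, e2⟩ := key v u hv hu hlt h1 h2
      rw [e1, e2, Finset.pair_comm]
  · -- converse
    intro hR
    -- helper: every pair in τ is adjacent or equals (0, m-p)
    have key : ∀ a b, a ∈ τ → b ∈ τ → a < b →
        (b ≤ a + p ∨ a + n ≤ b + p) ∨ (a = 0 ∧ b = m - p) := by
      intro a b ha hb hab
      have han := hτ a ha
      have hbn := hτ b hb
      by_cases hadj : adjCnp n p a b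
      · exact Or.inl ((S13.adj_iff hpn han hbn hab).mp hadj)
      · right
        have hpair := hR a b ha hb (by omega) hadj
        have h1 : a ∈ ({0, m - p} : Finset ℕ) := by
          rw [← hpair]; simp
        have h2 : b ∈ ({0, m - p} : Finset ℕ) := by
          rw [← hpair]; simp
        have h3 : (0 : ℕ) ∈ ({a, b} : Finset ℕ) := by
          rw [hpair]; simp
        simp only [Finset.mem_insert, Finset.mem_singleton] at h1 h2 h3
        omega
    -- get the disconnected pair from the face hypothesis
    obtain ⟨-, u₀, hu₀, v₀, hv₀, h1, h2, h3⟩ := (S13.faces_iff hpn σ).mp hσ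
    have hk := key u₀ v₀ hu₀ hv₀ h1
    have hu₀0 : u₀ = 0 ∧ v₀ = m - p := by
      rcases hk with h | h
      · omega
      · exact h
    obtain ⟨rfl, rfl⟩ := hu₀0
    -- now m - p ∈ τ, 0 ∈ τ, p < m - p, m - p + p < n
    have h2p : 2 * p < m := by
      have := hmax (m - p) hv₀
      omega
    -- trichotomy
    have htri : ∀ w ∈ τ, w = 0 ∨ w = m - p ∨ n ≤ w + p := by
      intro w hw
      by_cases hw0 : w = 0
      · exact Or.inl hw0
      by_cases hwmp : w = m - p
      · exact Or.inr (Or.inl hwmp)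
      have hwn := hτ w hw
      have k1 := key 0 w hu₀ hw (by omega)
      have hwp : ¬(w ≤ p) := by
        intro hwle
        have k2 := key w m hw hmτ (by omega)
        have k3 := key w (m - p) hw hv₀ (by omega)
        omega
      omega
    exact ⟨hu₀, m, hmτ, hmax, by have := htri m hmτ; omega, hv₀, htri⟩
end
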